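/- arXiv:1406.6584 — 4 statements merged into one kernel-verified Lean document; each statement's English description precedes it below -/
import Mathlib

section
/- Let f : [0,∞) → [0,∞) be nondecreasing and satisfy f(cλt) ≥ λ f(t) for all λ ≥ 1 and t ≥ t₀, where t₀ ≥ 0 and c ≥ 2. Then there exists a function g : [0,∞) → [0,∞) which is convex on [c·t₀, ∞), satisfies g(c·t₀) = 0, and satisfies g(t) ≤ f(t) ≤ g(c²t) for all t ≥ c·t₀. -/
/-!
The minorant `g` is the supremum, over `s ≥ t₀` with `s > 0`, of the ramps
`t ↦ max (f s / (c s) * (t - c s)) 0`. Each ramp is convex and vanishes on `(-∞, c s] ⊇ (-∞, c t₀]`.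
Sublinearity with `λ = t / (c s)` gives `f s / (c s) * t ≤ f t` for `t ≥ c s`, so every ramp lies
below `f`; and the ramp for `s = t`, evaluated at `c² t`, equals `(c - 1) f t ≥ f t`. At `t = 0`, which forces `t₀ = 0`, sublinearity with `λ = 2` gives
`f 0 ≤ 0`.
-/

open Set

theorem ConvexOn.ciSup {E ι : Type*} [AddCommGroup E] [Module ℝ E] [Nonempty ι] {s : Set E}
    {f : ι → E → ℝ} (hf : ∀ i, ConvexOn ℝ s (f i))
    (hbdd : ∀ x ∈ s, BddAbove (range fun i ↦ f i x)) :
    ConvexOn ℝ s fun x ↦ ⨆ i, f i x := by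
  refine ⟨(hf (Classical.arbitrary ι)).1, fun x hx y hy a b ha hb hab ↦ ciSup_le fun i ↦ ?_⟩
  calc f i (a • x + b • y) ≤ a * f i x + b * f i y := (hf i).2 hx hy ha hb hab
    _ ≤ a * (⨆ i, f i x) + b * ⨆ i, f i y := by
      gcongr
      · exact le_ciSup (hbdd x hx) i
      · exact le_ciSup (hbdd y hy) i
    _ = _ := rfl

def ramp (m b t : ℝ) : ℝ := max (m * (t - b)) 0

lemma ramp_nonneg (m b t : ℝ) : 0 ≤ ramp m b t := le_max_right _ _

lemma ramp_eq_zero {m b t : ℝ} (hm : 0 ≤ m) (ht : t ≤ b) : ramp m b t = 0 :=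
  max_eq_right (mul_nonpos_of_nonneg_of_nonpos hm (by linarith))

lemma convexOn_ramp (m b : ℝ) : ConvexOn ℝ univ (ramp m b) := by
  have hlin : ConvexOn ℝ univ fun t : ℝ ↦ m * t + -(m * b) :=
    ((LinearMap.mul ℝ ℝ m).convexOn convex_univ).add_const _
  have hramp : ramp m b = (fun t ↦ m * t + -(m * b)) ⊔ fun _ ↦ 0 := by
    ext t
    simp only [ramp, Pi.sup_apply]
    congr 1
    ring
  rw [hramp]
  exact hlin.sup (convexOn_const 0 convex_univ)

section Sublinear

variable {f : ℝ → ℝ} {t₀ c : ℝ} (hf_nonneg : ∀ t, 0 ≤ t → 0 ≤ f t)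
  (hsub : ∀ l : ℝ, 1 ≤ l → ∀ t : ℝ, t₀ ≤ t → l * f t ≤ f (c * l * t))

include hsub in
lemma apply_zero_nonpos_of_sublinear (ht₀ : t₀ ≤ 0) : f 0 ≤ 0 := by
  have := hsub 2 one_le_two 0 ht₀
  simp only [mul_zero] at this
  linarith

include hf_nonneg hsub in
lemma ramp_le_of_sublinear (hc : 0 < c) {s t : ℝ} (hs₀ : t₀ ≤ s) (hs : 0 < s) (ht : 0 ≤ t) :
    ramp (f s / (c * s)) (c * s) t ≤ f t := by
  have hcs : 0 < c * s := mul_pos hc hs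
  have hslope : 0 ≤ f s / (c * s) := div_nonneg (hf_nonneg s hs.le) hcs.le
  rcases le_total t (c * s) with hle | hge
  · rw [ramp_eq_zero hslope hle]
    exact hf_nonneg t ht
  refine max_le ?_ (hf_nonneg t ht)
  have hscale := hsub (t / (c * s)) ((one_le_div hcs).2 hge) s hs₀
  rw [show c * (t / (c * s)) * s = t by field_simp] at hscale
  calc f s / (c * s) * (t - c * s) ≤ f s / (c * s) * t := by gcongr; linarith
    _ = t / (c * s) * f s := by ring
    _ ≤ f t := hscale

end Sublinear

lemma le_ramp_sq {c t y : ℝ} (hc : 2 ≤ c) (ht : 0 < t) (hy : 0 ≤ y) :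
    y ≤ ramp (y / (c * t)) (c * t) (c ^ 2 * t) := by
  have hval : y / (c * t) * (c ^ 2 * t - c * t) = (c - 1) * y := by
    field_simp
  refine le_max_of_le_left ?_
  rw [hval]
  nlinarith

theorem stmt0_general (f : ℝ → ℝ) (t₀ c : ℝ)
    (hf_nonneg : ∀ t, 0 ≤ t → 0 ≤ f t)
    (ht₀ : 0 ≤ t₀) (hc : 2 ≤ c)
    (hsub : ∀ l : ℝ, 1 ≤ l → ∀ t : ℝ, t₀ ≤ t → l * f t ≤ f (c * l * t)) :
    ∃ g : ℝ → ℝ, (∀ t, 0 ≤ t → 0 ≤ g t) ∧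
      ConvexOn ℝ (Set.Ici (c * t₀)) g ∧
      g (c * t₀) = 0 ∧
      ∀ t, c * t₀ ≤ t → g t ≤ f t ∧ f t ≤ g (c ^ 2 * t) := by
  have hc₀ : 0 < c := by linarith
  have hct₀ : t₀ ≤ c * t₀ := by nlinarith
  let S := Ici t₀ ∩ Ioi 0
  have : Nonempty S := ⟨⟨t₀ + 1, by simp [S]; linarith⟩⟩
  let r : S → ℝ → ℝ := fun s ↦ ramp (f s / (c * s)) (c * s)
  have hr_le : ∀ s : S, ∀ t, 0 ≤ t → r s t ≤ f t := fun s t ht ↦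
    ramp_le_of_sublinear hf_nonneg hsub hc₀ s.2.1 s.2.2 ht
  have hbdd : ∀ t, 0 ≤ t → BddAbove (range fun s ↦ r s t) := fun t ht ↦
    ⟨f t, forall_mem_range.2 fun s ↦ hr_le s t ht⟩
  have hg_nonneg : ∀ t, 0 ≤ ⨆ s, r s t := fun t ↦ Real.iSup_nonneg fun s ↦ ramp_nonneg _ _ _
  refine ⟨fun t ↦ ⨆ s, r s t, fun t _ ↦ hg_nonneg t, ?_, ?_, ?_⟩
  · exact ConvexOn.ciSup (fun s ↦ (convexOn_ramp _ _).subset (subset_univ _) (convex_Ici _))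
      fun t ht ↦ hbdd t (ht₀.trans (hct₀.trans ht))
  · refine le_antisymm (Real.iSup_le (fun s ↦ (ramp_eq_zero ?_ ?_).le) le_rfl) (hg_nonneg _)
    · exact div_nonneg (hf_nonneg s s.2.2.le) (mul_pos hc₀ s.2.2).le
    · exact mul_le_mul_of_nonneg_left s.2.1 hc₀.le
  intro t ht
  have ht0 : 0 ≤ t := ht₀.trans (hct₀.trans ht)
  refine ⟨Real.iSup_le (fun s ↦ hr_le s t ht0) (hf_nonneg t ht0), ?_⟩
  rcases ht0.eq_or_lt with rfl | htpos
  · have ht₀0 : t₀ = 0 := by nlinarith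
    exact (apply_zero_nonpos_of_sublinear hsub ht₀0.le).trans (hg_nonneg _)
  · calc f t ≤ r ⟨t, hct₀.trans ht, htpos⟩ (c ^ 2 * t) := le_ramp_sq hc htpos (hf_nonneg t ht0)
      _ ≤ ⨆ s, r s (c ^ 2 * t) := le_ciSup (hbdd _ (by positivity)) _

/-- If a nondecreasing `f : [0,∞) → [0,∞)` satisfies `f (c * l * t) ≥ l * f t` for all
`l ≥ 1`, `t ≥ t₀`, with `t₀ ≥ 0`, `c ≥ 2`, then there is `g` convex on `[c*t₀, ∞)` with
`g (c*t₀) = 0` and `g t ≤ f t ≤ g (c^2 * t)` for `t ≥ c*t₀`. -/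
theorem stmt0 (f : ℝ → ℝ) (t₀ c : ℝ)
    (hf_nonneg : ∀ t, 0 ≤ t → 0 ≤ f t)
    (hf_mono : MonotoneOn f (Set.Ici (0 : ℝ)))
    (ht₀ : 0 ≤ t₀) (hc : 2 ≤ c)
    (hsub : ∀ l : ℝ, 1 ≤ l → ∀ t : ℝ, t₀ ≤ t → l * f t ≤ f (c * l * t)) :
    ∃ g : ℝ → ℝ, (∀ t, 0 ≤ t → 0 ≤ g t) ∧
      ConvexOn ℝ (Set.Ici (c * t₀)) g ∧
      g (c * t₀) = 0 ∧
      ∀ t, c * t₀ ≤ t → g t ≤ f t ∧ f t ≤ g (c ^ 2 * t) :=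
  stmt0_general f t₀ c hf_nonneg ht₀ hc hsub
end

section
/- Let X be a random variable whose moments grow α-regularly, i.e. ‖X‖_p ≤ α(p/q)‖X‖_q for all p ≥ q ≥ 2, with α ≥ 1. Let q ≥ 2 and set t = (1−1/e)‖X‖_q, assuming ‖X‖_q < ∞ and ‖X‖_q > 0. Then N(t) := −ln P(|X| > t) satisfies N(t) ≤ q·ln(e(2α)²). -/
/-!
Apply the Paley–Zygmund inequality to `Z = |X|^q` at level `θ = (1 - 1/e)^q`, so that
`{Z > θ E Z} = {|X| > t}`: this gives `P(|X| > t) ≥ (1 - θ)² (E Z)² / E Z²`. Regular growth bounds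
`E Z² = ‖X‖_{2q}^{2q} ≤ (2α ‖X‖_q)^{2q} = (2α)^{2q} (E Z)²`, and `1 - θ ≥ 1/e ≥ e^{-q/2}` for
`q ≥ 2`, so `P(|X| > t) ≥ e^{-q} (2α)^{-2q} = exp(-q ln(e (2α)²))`.
-/

open MeasureTheory

/-- `‖X‖_p = (E|X|^p)^{1/p}`. -/
noncomputable def mnorm {Ω : Type*} [MeasurableSpace Ω] (μ : Measure Ω) (X : Ω → ℝ)
    (p : ℝ) : ℝ :=
  (∫ ω, |X ω| ^ p ∂μ) ^ (1 / p)

section PaleyZygmund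

variable {Ω : Type*} [MeasurableSpace Ω] {μ : Measure Ω}

theorem sq_integral_le_measureReal_univ_mul_integral_sq [IsFiniteMeasure μ] {f : Ω → ℝ}
    (hf : MemLp f 2 μ) : (∫ ω, f ω ∂μ) ^ 2 ≤ μ.real Set.univ * ∫ ω, f ω ^ 2 ∂μ := by
  have hHolder := integral_mul_norm_le_Lp_mul_Lq Real.HolderConjugate.two_two
    (f := f) (g := fun _ => (1 : ℝ)) (by simpa using hf) (memLp_const 1)
  simp only [norm_one, mul_one, one_pow, integral_const, smul_eq_mul, Real.norm_eq_abs,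
    Real.rpow_two, sq_abs, ← Real.sqrt_eq_rpow] at hHolder
  calc (∫ ω, f ω ∂μ) ^ 2 = |∫ ω, f ω ∂μ| ^ 2 := (sq_abs _).symm
    _ ≤ (√(∫ ω, f ω ^ 2 ∂μ) * √(μ.real Set.univ)) ^ 2 :=
      pow_le_pow_left₀ (abs_nonneg _) (abs_integral_le_integral_abs.trans hHolder) 2
    _ = μ.real Set.univ * ∫ ω, f ω ^ 2 ∂μ := by
      rw [mul_pow, Real.sq_sqrt (integral_nonneg fun ω => sq_nonneg _),
        Real.sq_sqrt measureReal_nonneg, mul_comm]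

theorem sq_setIntegral_le_measureReal_mul_setIntegral_sq [IsFiniteMeasure μ] {f : Ω → ℝ}
    (hf : MemLp f 2 μ) (s : Set Ω) :
    (∫ ω in s, f ω ∂μ) ^ 2 ≤ μ.real s * ∫ ω in s, f ω ^ 2 ∂μ := by
  simpa only [measureReal_restrict_apply_univ] using
    sq_integral_le_measureReal_univ_mul_integral_sq (hf.restrict s)

theorem paley_zygmund [IsProbabilityMeasure μ] {Z : Ω → ℝ} (hZ0 : 0 ≤ᵐ[μ] Z) (hZ : MemLp Z 2 μ)
    {θ : ℝ} (hθ0 : 0 ≤ θ) (hθ1 : θ ≤ 1) :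
    (1 - θ) ^ 2 * (∫ ω, Z ω ∂μ) ^ 2
      ≤ μ.real {ω | θ * ∫ ω, Z ω ∂μ < Z ω} * ∫ ω, Z ω ^ 2 ∂μ := by
  set A := {ω | θ * ∫ ω, Z ω ∂μ < Z ω}
  have hA : NullMeasurableSet A μ := nullMeasurableSet_lt aemeasurable_const hZ.1.aemeasurable
  have hZi : Integrable Z μ := hZ.integrable one_le_two
  have hmean : 0 ≤ ∫ ω, Z ω ∂μ := integral_nonneg_of_ae hZ0
  have hcompl : ∫ ω in Aᶜ, Z ω ∂μ ≤ θ * ∫ ω, Z ω ∂μ := calc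
    ∫ ω in Aᶜ, Z ω ∂μ ≤ ∫ ω in Aᶜ, θ * ∫ ω, Z ω ∂μ ∂μ :=
      setIntegral_mono_on₀ hZi.integrableOn (integrableOn_const (measure_ne_top μ _)) hA.compl
        fun ω hω => not_lt.1 hω
    _ = μ.real Aᶜ * (θ * ∫ ω, Z ω ∂μ) := by rw [setIntegral_const, smul_eq_mul]
    _ ≤ θ * ∫ ω, Z ω ∂μ := mul_le_of_le_one_left (by positivity) measureReal_le_one
  have hmass : (1 - θ) * ∫ ω, Z ω ∂μ ≤ ∫ ω in A, Z ω ∂μ := by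
    linarith [integral_add_compl₀ hA hZi]
  calc (1 - θ) ^ 2 * (∫ ω, Z ω ∂μ) ^ 2 = ((1 - θ) * ∫ ω, Z ω ∂μ) ^ 2 := by ring
    _ ≤ (∫ ω in A, Z ω ∂μ) ^ 2 := pow_le_pow_left₀ (by nlinarith) hmass 2
    _ ≤ μ.real A * ∫ ω in A, Z ω ^ 2 ∂μ := sq_setIntegral_le_measureReal_mul_setIntegral_sq hZ A
    _ ≤ μ.real A * ∫ ω, Z ω ^ 2 ∂μ := mul_le_mul_of_nonneg_left
      (setIntegral_le_integral hZ.integrable_sq (ae_of_all _ fun ω => sq_nonneg _))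
      measureReal_nonneg

end PaleyZygmund

section Moments

variable {Ω : Type*} [MeasurableSpace Ω] (μ : Measure Ω) (X : Ω → ℝ)

theorem mnorm_nonneg (p : ℝ) : 0 ≤ mnorm μ X p :=
  Real.rpow_nonneg (integral_nonneg fun _ => Real.rpow_nonneg (abs_nonneg _) _) _

theorem mnorm_rpow_self {p : ℝ} (hp : p ≠ 0) : mnorm μ X p ^ p = ∫ ω, |X ω| ^ p ∂μ := by
  rw [mnorm, ← Real.rpow_mul (integral_nonneg fun _ => Real.rpow_nonneg (abs_nonneg _) _),
    one_div_mul_cancel hp, Real.rpow_one]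

variable {μ X}

theorem MeasureTheory.MemLp.abs_rpow_two {q : ℝ} (hq : 0 < q)
    (hX : MemLp X (ENNReal.ofReal (2 * q)) μ) : MemLp (fun ω => |X ω| ^ q) 2 μ := by
  have h := hX.norm_rpow_div (ENNReal.ofReal q)
  rwa [← ENNReal.ofReal_div_of_pos hq, mul_div_cancel_right₀ _ hq.ne', ENNReal.toReal_ofReal hq.le,
    ENNReal.ofReal_ofNat] at h

theorem paley_zygmund_abs_rpow [IsProbabilityMeasure μ] {q : ℝ} (hq : 0 < q)
    (hX : MemLp X (ENNReal.ofReal (2 * q)) μ) {c : ℝ} (hc0 : 0 ≤ c) (hc1 : c ≤ 1) :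
    (1 - c ^ q) ^ 2 * (mnorm μ X q ^ q) ^ 2
      ≤ μ.real {ω | c * mnorm μ X q < |X ω|} * mnorm μ X (2 * q) ^ (2 * q) := by
  have hPZ := paley_zygmund (ae_of_all μ fun ω => Real.rpow_nonneg (abs_nonneg (X ω)) q)
    (hX.abs_rpow_two hq) (Real.rpow_nonneg hc0 q) (Real.rpow_le_one hc0 hc1 hq.le)
  have hlevel : {ω | c ^ q * ∫ ω, |X ω| ^ q ∂μ < |X ω| ^ q} = {ω | c * mnorm μ X q < |X ω|} := by
    ext ω
    change (_ : ℝ) < _ ↔ (_ : ℝ) < _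
    rw [← mnorm_rpow_self μ X hq.ne',
      ← Real.mul_rpow hc0 (mnorm_nonneg μ X q),
      Real.rpow_lt_rpow_iff (mul_nonneg hc0 (mnorm_nonneg μ X q)) (abs_nonneg _) hq]
  have hsq : ∫ ω, (|X ω| ^ q) ^ 2 ∂μ = mnorm μ X (2 * q) ^ (2 * q) := by
    rw [mnorm_rpow_self μ X (by positivity)]
    simp_rw [← Real.rpow_natCast, ← Real.rpow_mul (abs_nonneg _), mul_comm q]
    norm_num
  rwa [hlevel, hsq, ← mnorm_rpow_self μ X hq.ne'] at hPZ

theorem mnorm_two_mul_rpow_le {q K : ℝ} (hq : 0 < q) (hK : 0 ≤ K)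
    (h : mnorm μ X (2 * q) ≤ K * mnorm μ X q) :
    mnorm μ X (2 * q) ^ (2 * q) ≤ (K ^ q) ^ 2 * (mnorm μ X q ^ q) ^ 2 := calc
  mnorm μ X (2 * q) ^ (2 * q) ≤ (K * mnorm μ X q) ^ (2 * q) := by
    gcongr
    exact mnorm_nonneg μ X _
  _ = (K ^ q) ^ 2 * (mnorm μ X q ^ q) ^ 2 := by
    rw [mul_comm 2 q, Real.rpow_mul (mul_nonneg hK (mnorm_nonneg μ X q)), Real.rpow_two,
      Real.mul_rpow hK (mnorm_nonneg μ X q), mul_pow]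

end Moments

theorem exp_neg_le_sq_one_sub_rpow {q : ℝ} (hq : 2 ≤ q) :
    Real.exp (-q) ≤ (1 - (1 - 1 / Real.exp 1) ^ q) ^ 2 := by
  have he : 1 / Real.exp 1 = Real.exp (-1) := by rw [Real.exp_neg, one_div]
  have hc0 : 0 ≤ 1 - Real.exp (-1) := by
    linarith [Real.exp_le_one_iff.2 (by norm_num : (-1 : ℝ) ≤ 0)]
  have hθ : (1 - Real.exp (-1)) ^ q ≤ 1 - Real.exp (-1) :=
    Real.rpow_le_self_of_le_one hc0 (by linarith [Real.exp_pos (-1)]) (by linarith)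
  calc Real.exp (-q) = Real.exp (-(q / 2)) ^ 2 := by rw [← Real.exp_nat_mul]; ring_nf
    _ ≤ Real.exp (-1) ^ 2 := by gcongr; linarith
    _ ≤ (1 - (1 - 1 / Real.exp 1) ^ q) ^ 2 := by rw [he]; gcongr; linarith

theorem exp_neg_mul_log_mul_rpow_sq {α : ℝ} (hα : 0 < α) (q : ℝ) :
    Real.exp (-(q * Real.log (Real.exp 1 * (2 * α) ^ 2))) * ((2 * α) ^ q) ^ 2 = Real.exp (-q) := by
  rw [Real.log_mul (Real.exp_pos 1).ne' (by positivity), Real.log_exp, Real.log_pow,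
    Real.rpow_def_of_pos (by positivity), ← Real.exp_nat_mul, ← Real.exp_add]
  push_cast
  ring_nf

/-- If the moments of `X` grow α-regularly, `q ≥ 2` and `t = (1 - 1/e)‖X‖_q` with
`0 < ‖X‖_q < ∞`, then `N(t) = -ln P(|X| > t) ≤ q ln(e (2α)²)`, i.e.
`P(|X| > t) ≥ exp(-q ln(e (2α)²))`. -/
theorem stmt3 {Ω : Type*} [MeasurableSpace Ω] (μ : Measure Ω) [IsProbabilityMeasure μ]
    (X : Ω → ℝ) (α : ℝ) (hα : 1 ≤ α)
    (hmem : ∀ p : ℝ, 2 ≤ p → MemLp X (ENNReal.ofReal p) μ)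
    (hreg : ∀ p q : ℝ, 2 ≤ q → q ≤ p → mnorm μ X p ≤ α * (p / q) * mnorm μ X q)
    (q : ℝ) (hq : 2 ≤ q) (hpos : 0 < mnorm μ X q) :
    Real.exp (-(q * Real.log (Real.exp 1 * (2 * α) ^ 2)))
      ≤ (μ {ω | (1 - 1 / Real.exp 1) * mnorm μ X q < |X ω|}).toReal := by
  have hq0 : 0 < q := by linarith
  have hc0 : 0 ≤ 1 - 1 / Real.exp 1 := by
    rw [sub_nonneg, div_le_one (Real.exp_pos 1)]
    exact Real.one_le_exp zero_le_one
  have hc1 : 1 - 1 / Real.exp 1 ≤ 1 := by linarith [one_div_pos.2 (Real.exp_pos 1)]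
  have hPZ := paley_zygmund_abs_rpow hq0 (hmem (2 * q) (by linarith)) hc0 hc1
  have hgrowth := mnorm_two_mul_rpow_le hq0 (by positivity : (0 : ℝ) ≤ 2 * α) (by
    simpa [mul_div_cancel_right₀ _ hq0.ne', mul_comm 2 α] using hreg (2 * q) q hq (by linarith))
  have hcancel : (1 - (1 - 1 / Real.exp 1) ^ q) ^ 2
      ≤ μ.real {ω | (1 - 1 / Real.exp 1) * mnorm μ X q < |X ω|} * ((2 * α) ^ q) ^ 2 := by
    refine le_of_mul_le_mul_right ?_ (by positivity : 0 < (mnorm μ X q ^ q) ^ 2)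
    exact (hPZ.trans (mul_le_mul_of_nonneg_left hgrowth measureReal_nonneg)).trans_eq (by ring)
  refine le_of_mul_le_mul_right ?_ (by positivity : (0 : ℝ) < ((2 * α) ^ q) ^ 2)
  rw [exp_neg_mul_log_mul_rpow_sq (by linarith) q]
  exact (exp_neg_le_sq_one_sub_rpow hq).trans hcancel
end

section
/- Let (X_t)_{t∈ℓ²} be a canonical process X_t = ∑_i t_i X_i with independent standardized X_i, and suppose: (i) for every finite T ⊂ ℓ², E sup_{s,t∈T}(X_s − X_t) ≥ κ·γ_X(T), and (ii) ‖X_t‖_{2p} ≤ γ‖X_t‖_p for all p ≥ 1, t ∈ ℓ². Then X satisfies the Sudakov minoration principle with constant κ/γ: for every p ≥ 1 and finite T ⊂ ℓ² with |T| ≥ e^p and ‖X_s − X_t‖_p ≥ u for all distinct s,t ∈ T, one has E sup_{s,t∈T}(X_s − X_t) ≥ (κ/γ)u. -/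
/-!
Pick `k` with `2 ^ k ≤ p < 2 ^ (k + 1)`. As `|T| ≥ e ^ p > 2 ^ 2 ^ k`, every admissible sequence
has a cell of `A_k` containing two distinct points `s, t` of `T`, whence
`γ_X(T) ≥ ‖X_s - X_t‖_{2^k} ≥ γ⁻¹ ‖X_s - X_t‖_{2^(k+1)} ≥ γ⁻¹ ‖X_s - X_t‖_p ≥ u / γ`.
The moment comparison is assumed for `X_{s-t}`, which equals `X_s - X_t` only where both series
converge. By Kolmogorov's zero-one law each series `∑ tᵢ Xᵢ` converges a.s. or diverges a.s.,
and in the latter case `X_t` is a.e. its junk value `0`; so `X_s - X_t` is a.e. equal to one of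
`X_{s-t}`, `X_s`, `-X_t`.
-/

open MeasureTheory ProbabilityTheory ENNReal

/-- An admissible sequence of partitions of `T`, together with a choice `cell n t` of the
element of the `n`-th partition containing `t`. -/
structure AdmissibleSeq {E : Type*} (T : Set E) where
  part : ℕ → Set (Set E)
  cell : ℕ → E → Set E
  zero : part 0 = {T}
  finite : ∀ n, (part n).Finite
  card : ∀ n, 1 ≤ n → (part n).ncard ≤ 2 ^ 2 ^ n
  cover : ∀ n, ⋃₀ part n = T
  disj : ∀ n, (part n).PairwiseDisjoint id
  refine : ∀ n, ∀ A ∈ part (n + 1), ∃ B ∈ part n, A ⊆ B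
  cellMem : ∀ n, ∀ t ∈ T, cell n t ∈ part n ∧ t ∈ cell n t

/-- The Talagrand-type functional `γ_X(T) = inf sup_{t∈T} ∑_n Δ_{2^n}(A_n(t))`, where the
infimum runs over admissible sequences of partitions and `Δ_p` is the diameter in the
metric `d_p(s,s') = ‖X_s - X_{s'}‖_p`. -/
noncomputable def gammaX {Ω E : Type*} [MeasurableSpace Ω] (μ : Measure Ω)
    (Xp : E → Ω → ℝ) (T : Set E) : ℝ≥0∞ :=
  ⨅ A : AdmissibleSeq T, ⨆ t ∈ T, ∑' n : ℕ,
    ⨆ s ∈ A.cell n t, ⨆ s' ∈ A.cell n t,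
      eLpNorm (fun ω => Xp s ω - Xp s' ω) (2 ^ n) μ

/-- The canonical process `X_t ω = ∑ᵢ tᵢ Xᵢ(ω)` for `t ∈ ℓ²`. -/
noncomputable def canonicalProc {Ω : Type*} (X : ℕ → Ω → ℝ)
    (t : lp (fun _ : ℕ => ℝ) 2) (ω : Ω) : ℝ :=
  ∑' i, t i * X i ω

open Filter

section Summability

variable {Ω : Type*} {m0 : MeasurableSpace Ω} {μ : Measure Ω}

theorem measurableSet_summable {Y : ℕ → Ω → ℝ} (hY : ∀ i, Measurable (Y i)) :
    MeasurableSet {ω | Summable fun i => Y i ω} :=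
  measurableSet_exists_tendsto fun s => Finset.measurable_sum s fun i _ => hY i

/-- Summability is a tail event, so Kolmogorov's zero-one law applies. -/
theorem iIndepFun.ae_summable_or_ae_not_summable_of_measurable [IsProbabilityMeasure μ]
    {Y : ℕ → Ω → ℝ} (hY : ∀ i, Measurable (Y i)) (hindep : iIndepFun Y μ) :
    (∀ᵐ ω ∂μ, Summable fun i => Y i ω) ∨ ∀ᵐ ω ∂μ, ¬ Summable fun i => Y i ω := by
  set S := {ω | Summable fun i => Y i ω}
  let σ : ℕ → MeasurableSpace Ω := fun i => MeasurableSpace.comap (Y i) inferInstance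
  have hS_tail : MeasurableSet[limsup σ atTop] S := by
    rw [limsup_eq_iInf_iSup_of_nat, MeasurableSpace.measurableSet_iInf]
    intro N
    have hshift : S = {ω | Summable fun i => Y (i + N) ω} := by
      ext ω; exact (summable_nat_add_iff N).symm
    rw [hshift]
    refine measurableSet_summable (m0 := ⨆ j ≥ N, σ j) fun i => ?_
    exact (comap_measurable (Y (i + N))).mono (le_iSup₂ (f := fun j (_ : j ≥ N) => σ j)
      (i + N) (Nat.le_add_left N i)) le_rfl
  rcases measure_zero_or_one_of_measurableSet_limsup_atTop (fun i => (hY i).comap_le)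
    hindep.iIndep hS_tail with h | h
  · exact Or.inr (measure_eq_zero_iff_ae_notMem.mp h)
  · exact Or.inl ((ae_iff_measure_eq (measurableSet_summable hY).nullMeasurableSet).mpr
      (by rw [h, measure_univ]))

theorem iIndepFun.ae_summable_or_ae_not_summable [IsProbabilityMeasure μ]
    {Y : ℕ → Ω → ℝ} (hY : ∀ i, AEMeasurable (Y i) μ) (hindep : iIndepFun Y μ) :
    (∀ᵐ ω ∂μ, Summable fun i => Y i ω) ∨ ∀ᵐ ω ∂μ, ¬ Summable fun i => Y i ω := by
  have hmk : ∀ᵐ ω ∂μ, ∀ i, Y i ω = (hY i).mk (Y i) ω := ae_all_iff.mpr fun i => (hY i).ae_eq_mk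
  have hsummable_congr : ∀ᵐ ω ∂μ, (Summable fun i => Y i ω) ↔
      Summable fun i => (hY i).mk (Y i) ω := by
    filter_upwards [hmk] with ω hω
    simp only [hω]
  rcases iIndepFun.ae_summable_or_ae_not_summable_of_measurable (fun i => (hY i).measurable_mk)
    ((iIndepFun_congr fun i => (hY i).ae_eq_mk).mp hindep) with h | h
  · exact Or.inl (by filter_upwards [h, hsummable_congr] with ω h1 h2 using h2.mpr h1)
  · exact Or.inr (by filter_upwards [h, hsummable_congr] with ω h1 h2 using mt h2.mp h1)

end Summability

section CanonicalProcess

variable {Ω : Type*} {X : ℕ → Ω → ℝ}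

theorem canonicalProc_sub {s t : lp (fun _ : ℕ => ℝ) 2} {ω : Ω}
    (hs : Summable fun i => s i * X i ω) (ht : Summable fun i => t i * X i ω) :
    canonicalProc X (s - t) ω = canonicalProc X s ω - canonicalProc X t ω := by
  simp only [canonicalProc, lp.coeFn_sub, Pi.sub_apply, sub_mul]
  exact hs.tsum_sub ht

variable [MeasurableSpace Ω] {μ : Measure Ω}

theorem aestronglyMeasurable_canonicalProc (hX : ∀ i, AEMeasurable (X i) μ)
    (t : lp (fun _ : ℕ => ℝ) 2) : AEStronglyMeasurable (canonicalProc X t) μ :=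
  (AEMeasurable.tsum fun i => (hX i).const_mul (t i)).aestronglyMeasurable

theorem canonicalProc_ae_summable_or_ae_eq_zero [IsProbabilityMeasure μ]
    (hX : ∀ i, AEMeasurable (X i) μ) (hindep : iIndepFun X μ) (t : lp (fun _ : ℕ => ℝ) 2) :
    (∀ᵐ ω ∂μ, Summable fun i => t i * X i ω) ∨ canonicalProc X t =ᵐ[μ] 0 := by
  refine (iIndepFun.ae_summable_or_ae_not_summable (fun i => (hX i).const_mul (t i))
    (hindep.comp (fun i x => t i * x) fun i => measurable_const_mul (t i))).imp id fun h => ?_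
  filter_upwards [h] with ω hω using tsum_eq_zero_of_not_summable hω

end CanonicalProcess

section RegularMoments

variable {Ω : Type*} [MeasurableSpace Ω] {μ : Measure Ω} {γ : ℝ≥0∞} {f g : Ω → ℝ}

def HasRegularMoments (μ : Measure Ω) (γ : ℝ≥0∞) (f : Ω → ℝ) : Prop :=
  ∀ q : ℝ, 1 ≤ q → eLpNorm f (ENNReal.ofReal (2 * q)) μ ≤ γ * eLpNorm f (ENNReal.ofReal q) μ

theorem HasRegularMoments.congr_ae (hf : HasRegularMoments μ γ f) (hfg : f =ᵐ[μ] g) :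
    HasRegularMoments μ γ g := fun q hq => by
  simpa only [eLpNorm_congr_ae hfg] using hf q hq

theorem HasRegularMoments.neg (hf : HasRegularMoments μ γ f) : HasRegularMoments μ γ (-f) :=
  fun q hq => by simpa only [eLpNorm_neg] using hf q hq

theorem HasRegularMoments.eLpNorm_le [IsProbabilityMeasure μ] (hf : HasRegularMoments μ γ f)
    (hf_meas : AEStronglyMeasurable f μ) {p : ℝ} {k : ℕ} (hp : p ≤ 2 ^ (k + 1)) :
    eLpNorm f (ENNReal.ofReal p) μ ≤ γ * eLpNorm f (2 ^ k) μ :=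
  calc eLpNorm f (ENNReal.ofReal p) μ ≤ eLpNorm f (ENNReal.ofReal (2 * 2 ^ k)) μ :=
        eLpNorm_le_eLpNorm_of_exponent_le (ENNReal.ofReal_le_ofReal (by rwa [← pow_succ']))
          hf_meas
    _ ≤ γ * eLpNorm f (ENNReal.ofReal (2 ^ k)) μ := hf _ (one_le_pow₀ one_le_two)
    _ = γ * eLpNorm f (2 ^ k) μ := by
        rw [ENNReal.ofReal_pow zero_le_two, ENNReal.ofReal_ofNat]

end RegularMoments

theorem hasRegularMoments_canonicalProc_sub {Ω : Type*} [MeasurableSpace Ω] {μ : Measure Ω}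
    [IsProbabilityMeasure μ] {X : ℕ → Ω → ℝ} {γ : ℝ≥0∞} (hX : ∀ i, AEMeasurable (X i) μ)
    (hindep : iIndepFun X μ) (hreg : ∀ t, HasRegularMoments μ γ (canonicalProc X t))
    (s t : lp (fun _ : ℕ => ℝ) 2) :
    HasRegularMoments μ γ (fun ω => canonicalProc X s ω - canonicalProc X t ω) := by
  rcases canonicalProc_ae_summable_or_ae_eq_zero hX hindep s with hs | hs
  · rcases canonicalProc_ae_summable_or_ae_eq_zero hX hindep t with ht | ht
    · refine (hreg (s - t)).congr_ae ?_
      filter_upwards [hs, ht] with ω hsω htω using canonicalProc_sub hsω htω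
    · refine (hreg s).congr_ae ?_
      filter_upwards [ht] with ω htω
      simp [htω]
  · refine (hreg t).neg.congr_ae ?_
    filter_upwards [hs] with ω hsω
    simp [hsω]

section SudakovMinoration

variable {E : Type*}

theorem AdmissibleSeq.exists_ne_mem_cell {T : Finset E} (A : AdmissibleSeq (T : Set E)) {k : ℕ}
    (hT : 2 ^ 2 ^ k < T.card) : ∃ x ∈ T, ∃ y ∈ T, x ≠ y ∧ x ∈ A.cell k x ∧ y ∈ A.cell k x := by
  have hcard : (A.finite k).toFinset.card ≤ 2 ^ 2 ^ k := by
    rw [← Set.ncard_eq_toFinset_card _ (A.finite k)]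
    rcases Nat.eq_zero_or_pos k with rfl | hk
    · simp [A.zero]
    · exact A.card k hk
  obtain ⟨x, hx, y, hy, hxy, hcell⟩ := Finset.exists_ne_map_eq_of_card_lt_of_maps_to
    (hcard.trans_lt hT) (f := A.cell k) fun t ht => by
      simpa using (A.cellMem k t (Finset.mem_coe.mpr ht)).1
  exact ⟨x, hx, y, hy, hxy, (A.cellMem k x hx).2, hcell ▸ (A.cellMem k y hy).2⟩

theorem le_gammaX_of_separated {Ω : Type*} [MeasurableSpace Ω] {μ : Measure Ω}
    (Xp : E → Ω → ℝ) {T : Finset E} {k : ℕ} (hT : 2 ^ 2 ^ k < T.card) {c : ℝ≥0∞}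
    (hsep : ∀ s ∈ T, ∀ t ∈ T, s ≠ t → c ≤ eLpNorm (fun ω => Xp s ω - Xp t ω) (2 ^ k) μ) :
    c ≤ gammaX μ Xp T := by
  refine le_iInf fun A => ?_
  obtain ⟨x, hx, y, hy, hxy, hxA, hyA⟩ := A.exists_ne_mem_cell hT
  calc c ≤ eLpNorm (fun ω => Xp x ω - Xp y ω) (2 ^ k) μ := hsep x hx y hy hxy
    _ ≤ ⨆ s ∈ A.cell k x, ⨆ s' ∈ A.cell k x, eLpNorm (fun ω => Xp s ω - Xp s' ω) (2 ^ k) μ :=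
        le_iSup₂_of_le x hxA (le_iSup₂_of_le y hyA le_rfl)
    _ ≤ ∑' n : ℕ, ⨆ s ∈ A.cell n x, ⨆ s' ∈ A.cell n x,
          eLpNorm (fun ω => Xp s ω - Xp s' ω) (2 ^ n) μ := ENNReal.le_tsum k
    _ ≤ _ := le_iSup₂_of_le (f := fun t (_ : t ∈ (T : Set E)) => ∑' n : ℕ,
          ⨆ s ∈ A.cell n t, ⨆ s' ∈ A.cell n t, eLpNorm (fun ω => Xp s ω - Xp s' ω) (2 ^ n) μ)
          x hx le_rfl

theorem two_pow_two_pow_lt_of_exp_le {k n : ℕ} {p : ℝ} (hk : 2 ^ k ≤ p) (hn : Real.exp p ≤ n) :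
    2 ^ 2 ^ k < n := by
  have : (2 : ℝ) ^ 2 ^ k < n :=
    calc (2 : ℝ) ^ 2 ^ k < Real.exp 1 ^ 2 ^ k :=
          pow_lt_pow_left₀ (by linarith [Real.exp_one_gt_d9]) zero_le_two (by positivity)
      _ = Real.exp (2 ^ k) := by rw [← Real.exp_nat_mul, mul_one]; norm_num
      _ ≤ n := (Real.exp_le_exp.mpr hk).trans hn
  exact_mod_cast this

theorem iSup_mem_iSup_mem_sub_nonneg [Nonempty E] (T : Finset E) (f : E → ℝ) :
    0 ≤ ⨆ s ∈ T, ⨆ t ∈ T, (f s - f t) := by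
  obtain ⟨s⟩ := ‹Nonempty E›
  exact Real.iSup_nonneg' ⟨s, Real.iSup_nonneg fun _ =>
    Real.iSup_nonneg' ⟨s, Real.iSup_nonneg fun _ => (sub_self (f s)).ge⟩⟩

theorem sudakov_of_le_gammaX {Ω : Type*} [MeasurableSpace Ω] {μ : Measure Ω}
    [IsProbabilityMeasure μ] [Nonempty E] (Xp : E → Ω → ℝ) {κ γ : ℝ} (hκ : 0 ≤ κ) (hγ : 0 < γ)
    (hmeas : ∀ s t, AEStronglyMeasurable (fun ω => Xp s ω - Xp t ω) μ)
    (hreg : ∀ s t, HasRegularMoments μ (ENNReal.ofReal γ) (fun ω => Xp s ω - Xp t ω))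
    {T : Finset E}
    (hlower : ENNReal.ofReal κ * gammaX μ Xp T ≤
      ENNReal.ofReal (∫ ω, ⨆ s ∈ T, ⨆ t ∈ T, (Xp s ω - Xp t ω) ∂μ))
    {p u : ℝ} (hp : 1 ≤ p) (hcard : Real.exp p ≤ T.card)
    (hsep : ∀ s ∈ T, ∀ t ∈ T, s ≠ t →
      ENNReal.ofReal u ≤ eLpNorm (fun ω => Xp s ω - Xp t ω) (ENNReal.ofReal p) μ) :
    κ / γ * u ≤ ∫ ω, ⨆ s ∈ T, ⨆ t ∈ T, (Xp s ω - Xp t ω) ∂μ := by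
  obtain ⟨k, hk, hpk⟩ := exists_nat_pow_near hp one_lt_two
  have hsep' : ∀ s ∈ T, ∀ t ∈ T, s ≠ t →
      ENNReal.ofReal (u / γ) ≤ eLpNorm (fun ω => Xp s ω - Xp t ω) (2 ^ k) μ := by
    intro s hs t ht hst
    rw [ENNReal.ofReal_div_of_pos hγ]
    exact ENNReal.div_le_of_le_mul'
      ((hsep s hs t ht hst).trans ((hreg s t).eLpNorm_le (hmeas s t) hpk.le))
  have hgamma := le_gammaX_of_separated Xp (two_pow_two_pow_lt_of_exp_le hk hcard) hsep'
  refine (ENNReal.ofReal_le_ofReal_iff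
    (integral_nonneg fun ω => iSup_mem_iSup_mem_sub_nonneg T _)).mp ?_
  calc ENNReal.ofReal (κ / γ * u) = ENNReal.ofReal κ * ENNReal.ofReal (u / γ) := by
        rw [← ENNReal.ofReal_mul hκ, mul_div_assoc', div_mul_eq_mul_div]
    _ ≤ ENNReal.ofReal κ * gammaX μ Xp T := mul_le_mul_right hgamma _
    _ ≤ _ := hlower

end SudakovMinoration

theorem stmt16_general {Ω : Type*} [MeasurableSpace Ω] (μ : Measure Ω) [IsProbabilityMeasure μ]
    (X : ℕ → Ω → ℝ) (κ γc : ℝ) (hκ : 0 < κ) (hγc : 0 < γc)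
    (hindep : iIndepFun X μ)
    (hL2 : ∀ i, MemLp (X i) 2 μ)
    (hlower : ∀ T : Finset (lp (fun _ : ℕ => ℝ) 2),
      ENNReal.ofReal κ * gammaX μ (canonicalProc X) (T : Set (lp (fun _ : ℕ => ℝ) 2))
        ≤ ENNReal.ofReal
            (∫ ω, ⨆ s ∈ T, ⨆ t ∈ T, (canonicalProc X s ω - canonicalProc X t ω) ∂μ))
    (hregnorm : ∀ p : ℝ, 1 ≤ p → ∀ t : lp (fun _ : ℕ => ℝ) 2,
      eLpNorm (canonicalProc X t) (ENNReal.ofReal (2 * p)) μ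
        ≤ ENNReal.ofReal γc * eLpNorm (canonicalProc X t) (ENNReal.ofReal p) μ) :
    ∀ p : ℝ, 1 ≤ p → ∀ u : ℝ, 0 ≤ u → ∀ T : Finset (lp (fun _ : ℕ => ℝ) 2),
      Real.exp p ≤ T.card →
      (∀ s ∈ T, ∀ t ∈ T, s ≠ t →
        ENNReal.ofReal u ≤
          eLpNorm (fun ω => canonicalProc X s ω - canonicalProc X t ω)
            (ENNReal.ofReal p) μ) →
      κ / γc * u ≤ ∫ ω, ⨆ s ∈ T, ⨆ t ∈ T, (canonicalProc X s ω - canonicalProc X t ω) ∂μ := by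
  intro p hp u _ T hcard hsep
  have hX : ∀ i, AEMeasurable (X i) μ := fun i => (hL2 i).aestronglyMeasurable.aemeasurable
  exact sudakov_of_le_gammaX (canonicalProc X) hκ.le hγc
    (fun s t => (aestronglyMeasurable_canonicalProc hX s).sub
      (aestronglyMeasurable_canonicalProc hX t))
    (hasRegularMoments_canonicalProc_sub hX hindep fun t q hq => hregnorm q hq t)
    (hlower T) hp hcard hsep

/-- If a canonical process satisfies `E sup_{s,t∈T}(X_s - X_t) ≥ κ γ_X(T)` for all finite
`T` and `‖X_t‖_{2p} ≤ γ ‖X_t‖_p`, then it satisfies Sudakov minoration with constant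
`κ/γ`. -/
theorem stmt16 {Ω : Type*} [MeasurableSpace Ω] (μ : Measure Ω) [IsProbabilityMeasure μ]
    (X : ℕ → Ω → ℝ) (κ γc : ℝ) (hκ : 0 < κ) (hγc : 0 < γc)
    (hindep : iIndepFun X μ)
    (hL2 : ∀ i, MemLp (X i) 2 μ)
    (hmean : ∀ i, ∫ ω, X i ω ∂μ = 0) (hvar : ∀ i, ∫ ω, (X i ω) ^ 2 ∂μ = 1)
    (hlower : ∀ T : Finset (lp (fun _ : ℕ => ℝ) 2),
      ENNReal.ofReal κ * gammaX μ (canonicalProc X) (T : Set (lp (fun _ : ℕ => ℝ) 2))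
        ≤ ENNReal.ofReal
            (∫ ω, ⨆ s ∈ T, ⨆ t ∈ T, (canonicalProc X s ω - canonicalProc X t ω) ∂μ))
    (hregnorm : ∀ p : ℝ, 1 ≤ p → ∀ t : lp (fun _ : ℕ => ℝ) 2,
      eLpNorm (canonicalProc X t) (ENNReal.ofReal (2 * p)) μ
        ≤ ENNReal.ofReal γc * eLpNorm (canonicalProc X t) (ENNReal.ofReal p) μ) :
    ∀ p : ℝ, 1 ≤ p → ∀ u : ℝ, 0 ≤ u → ∀ T : Finset (lp (fun _ : ℕ => ℝ) 2),
      Real.exp p ≤ T.card →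
      (∀ s ∈ T, ∀ t ∈ T, s ≠ t →
        ENNReal.ofReal u ≤
          eLpNorm (fun ω => canonicalProc X s ω - canonicalProc X t ω)
            (ENNReal.ofReal p) μ) →
      κ / γc * u ≤ ∫ ω, ⨆ s ∈ T, ⨆ t ∈ T, (canonicalProc X s ω - canonicalProc X t ω) ∂μ :=
  stmt16_general μ X κ γc hκ hγc hindep hL2 hlower hregnorm
end

section
/- For the canonical Bernoulli process X_t = ∑_i t_i ε_i with (ε_i) i.i.d. Rademacher, and T = {e_n : n ≥ 1} the canonical basis of ℓ², one has E sup_{s,t∈T}(X_s − X_t) = 2, while γ_X(T) = ∞. -/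
open MeasureTheory ProbabilityTheory ENNReal

/-! The coordinates `X_{e_n} = ε_n` are independent signs, so almost surely both signs occur
and `sup_{s,t ∈ T} (X_s - X_t) = 2` pointwise.

Two distinct coordinates differ by `2` on the event `{ε_m = 1, ε_n = -1}` of probability `1/4`,
so every cell with two points has `d_p`-diameter at least `1/2` for all `p ≥ 1`. Since the
partitions are finite and `T` is infinite, at each level `N` some point lies in an infinite cell,
and then so do all its coarser cells; its chaining sum is therefore at least `N / 2`. -/

namespace AdmissibleSeq

variable {E : Type*} {T : Set E} (A : AdmissibleSeq T)

lemma subset_of_mem_part {n : ℕ} {C : Set E} (hC : C ∈ A.part n) : C ⊆ T :=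
  A.cover n ▸ Set.subset_sUnion_of_mem hC

lemma cell_eq_of_mem {n : ℕ} {C : Set E} (hC : C ∈ A.part n) {t : E} (ht : t ∈ C) :
    A.cell n t = C := by
  obtain ⟨hcell, htcell⟩ := A.cellMem n t (A.subset_of_mem_part hC ht)
  by_contra hne
  exact Set.disjoint_left.mp (A.disj n hcell hC hne) htcell ht

lemma cell_succ_subset {t : E} (ht : t ∈ T) (n : ℕ) : A.cell (n + 1) t ⊆ A.cell n t := by
  obtain ⟨hcell, htcell⟩ := A.cellMem (n + 1) t ht
  obtain ⟨B, hB, hsub⟩ := A.refine n _ hcell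
  rwa [A.cell_eq_of_mem hB (hsub htcell)]

lemma cell_antitone {t : E} (ht : t ∈ T) : Antitone (A.cell · t) :=
  antitone_nat_of_succ_le (A.cell_succ_subset ht)

lemma exists_cell_infinite (hT : T.Infinite) (n : ℕ) : ∃ t ∈ T, (A.cell n t).Infinite := by
  obtain ⟨C, hC, hCinf⟩ : ∃ C ∈ A.part n, C.Infinite := by
    by_contra! hfin
    exact hT (A.cover n ▸ (A.finite n).sUnion hfin)
  obtain ⟨t, ht⟩ := hCinf.nonempty
  exact ⟨t, A.subset_of_mem_part hC ht, A.cell_eq_of_mem hC ht ▸ hCinf⟩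

theorem iSup_tsum_eq_top (hT : T.Infinite) (d : ℕ → E → E → ℝ≥0∞) {c : ℝ≥0∞}
    (hc : c ≠ 0) (hd : ∀ n, ∀ s ∈ T, ∀ s' ∈ T, s ≠ s' → c ≤ d n s s') :
    ⨆ t ∈ T, ∑' n, ⨆ s ∈ A.cell n t, ⨆ s' ∈ A.cell n t, d n s s' = ⊤ := by
  have hlevel : ∀ N : ℕ, (N : ℝ≥0∞) * c ≤
      ⨆ t ∈ T, ∑' n, ⨆ s ∈ A.cell n t, ⨆ s' ∈ A.cell n t, d n s s' := by
    intro N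
    obtain ⟨t, ht, hinf⟩ := A.exists_cell_infinite hT N
    refine le_iSup₂_of_le t ht ?_
    have hterm : ∀ n ≤ N, c ≤ ⨆ s ∈ A.cell n t, ⨆ s' ∈ A.cell n t, d n s s' := by
      intro n hn
      obtain ⟨s, hs, s', hs', hne⟩ := (hinf.mono (A.cell_antitone ht hn)).nontrivial
      have hsub := A.subset_of_mem_part (A.cellMem n t ht).1
      exact le_iSup₂_of_le s hs (le_iSup₂_of_le s' hs' (hd n s (hsub hs) s' (hsub hs') hne))
    calc (N : ℝ≥0∞) * c = ∑ _n ∈ Finset.range N, c := by simp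
      _ ≤ ∑ n ∈ Finset.range N, ⨆ s ∈ A.cell n t, ⨆ s' ∈ A.cell n t, d n s s' :=
        Finset.sum_le_sum fun n hn => hterm n (Finset.mem_range.mp hn).le
      _ ≤ _ := ENNReal.sum_le_tsum _
  rw [eq_top_iff, ← ENNReal.top_mul hc, ← ENNReal.iSup_natCast, ENNReal.iSup_mul]
  exact iSup_le hlevel

end AdmissibleSeq

theorem gammaX_eq_top_of_separated {Ω E : Type*} [MeasurableSpace Ω] (μ : Measure Ω)
    (Xp : E → Ω → ℝ) {T : Set E} (hT : T.Infinite) {c : ℝ≥0∞} (hc : c ≠ 0)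
    (hsep : ∀ p : ℝ≥0∞, 1 ≤ p → ∀ s ∈ T, ∀ s' ∈ T, s ≠ s' →
      c ≤ eLpNorm (fun ω => Xp s ω - Xp s' ω) p μ) :
    gammaX μ Xp T = ⊤ :=
  iInf_eq_top.mpr fun A => A.iSup_tsum_eq_top hT _ hc fun _ =>
    hsep _ (one_le_pow₀ one_le_two)

lemma ProbabilityTheory.iIndepFun.measure_iInter_preimage_eq_zero {Ω β : Type*}
    [MeasurableSpace Ω] [MeasurableSpace β] {μ : Measure Ω} {ε : ℕ → Ω → β}
    (hε : iIndepFun ε μ) {s : Set β} (hs : MeasurableSet s) {q : ℝ≥0∞} (hq : q < 1)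
    (hle : ∀ i, μ (ε i ⁻¹' s) ≤ q) :
    μ (⋂ i, ε i ⁻¹' s) = 0 := by
  refine le_zero_iff.mp (ge_of_tendsto' (ENNReal.tendsto_pow_atTop_nhds_zero_of_lt_one hq)
    fun n => ?_)
  calc μ (⋂ i, ε i ⁻¹' s) ≤ μ (⋂ i ∈ Finset.range n, ε i ⁻¹' s) :=
        measure_mono fun ω hω => Set.mem_iInter₂.mpr fun i _ => Set.mem_iInter.mp hω i
    _ = ∏ i ∈ Finset.range n, μ (ε i ⁻¹' s) :=
        hε.measure_inter_preimage_eq_mul _ fun _ _ => hs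
    _ ≤ q ^ n := by
        simpa using Finset.prod_le_pow_card (Finset.range n) _ q fun i _ => hle i

noncomputable def rademacher : Measure ℝ :=
  (2 : ℝ≥0∞)⁻¹ • (Measure.dirac 1 + Measure.dirac (-1))

lemma rademacher_singleton {c : ℝ} (hc : c = 1 ∨ c = -1) : rademacher {c} = 2⁻¹ := by
  rcases hc with rfl | rfl <;> norm_num [rademacher]

lemma rademacher_compl_singleton {c : ℝ} (hc : c = 1 ∨ c = -1) :
    rademacher {c}ᶜ = 2⁻¹ := by
  rcases hc with rfl | rfl <;>
    norm_num [rademacher, Measure.dirac_apply' _ (measurableSet_singleton _).compl]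

lemma rademacher_compl_pair : rademacher {1, -1}ᶜ = 0 := by
  simp [rademacher, Measure.dirac_apply' _ (Set.toFinite {(1 : ℝ), -1}).measurableSet.compl]

section Rademacher

variable {Ω : Type*} [MeasurableSpace Ω] {μ : Measure Ω}

lemma aemeasurable_of_map_eq_rademacher {X : Ω → ℝ} (hX : μ.map X = rademacher) :
    AEMeasurable X μ :=
  AEMeasurable.of_map_ne_zero fun h => by
    simpa [rademacher_singleton (Or.inl rfl)] using congrArg (· {1}) (hX.symm.trans h)

lemma measure_preimage_of_map_eq_rademacher {X : Ω → ℝ} (hX : μ.map X = rademacher)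
    {s : Set ℝ} (hs : MeasurableSet s) : μ (X ⁻¹' s) = rademacher s := by
  rw [← Measure.map_apply_of_aemeasurable (aemeasurable_of_map_eq_rademacher hX) hs, hX]

lemma ae_eq_one_or_neg_one_of_map_eq_rademacher {X : Ω → ℝ} (hX : μ.map X = rademacher) :
    ∀ᵐ ω ∂μ, X ω = 1 ∨ X ω = -1 := by
  have hnull := measure_preimage_of_map_eq_rademacher hX
    (Set.toFinite {(1 : ℝ), -1}).measurableSet.compl
  rw [rademacher_compl_pair] at hnull
  exact measure_eq_zero_iff_ae_notMem.mp hnull |>.mono fun ω hω => by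
    simpa [or_iff_not_imp_left] using hω

lemma inv_two_le_eLpNorm_sub_of_indepFun [IsProbabilityMeasure μ] {X Y : Ω → ℝ}
    (hX : μ.map X = rademacher) (hY : μ.map Y = rademacher) (hXY : IndepFun X Y μ)
    {p : ℝ≥0∞} (hp : 1 ≤ p) :
    2⁻¹ ≤ eLpNorm (X - Y) p μ := by
  have hmeas : AEMeasurable (X - Y) μ :=
    (aemeasurable_of_map_eq_rademacher hX).sub (aemeasurable_of_map_eq_rademacher hY)
  have hevent : μ (X ⁻¹' {1} ∩ Y ⁻¹' {-1}) = 2⁻¹ * 2⁻¹ := by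
    rw [hXY.measure_inter_preimage_eq_mul _ _ (measurableSet_singleton _)
      (measurableSet_singleton _),
      measure_preimage_of_map_eq_rademacher hX (measurableSet_singleton _),
      measure_preimage_of_map_eq_rademacher hY (measurableSet_singleton _),
      rademacher_singleton (Or.inl rfl), rademacher_singleton (Or.inr rfl)]
  have hsub : X ⁻¹' {1} ∩ Y ⁻¹' {-1} ⊆ {ω | 2 ≤ ‖(X - Y) ω‖ₑ} := by
    rintro ω ⟨hXω, hYω⟩
    simp_all [Real.enorm_eq_ofReal_abs]
    norm_num
  calc (2 : ℝ≥0∞)⁻¹ = 2 * μ (X ⁻¹' {1} ∩ Y ⁻¹' {-1}) := by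
        rw [hevent, ← mul_assoc, ENNReal.mul_inv_cancel two_ne_zero ENNReal.ofNat_ne_top,
          one_mul]
    _ ≤ 2 * μ {ω | 2 ≤ ‖(X - Y) ω‖ₑ} := by gcongr
    _ ≤ ∫⁻ ω, ‖(X - Y) ω‖ₑ ∂μ := mul_meas_ge_le_lintegral₀ hmeas.enorm 2
    _ = eLpNorm (X - Y) 1 μ := eLpNorm_one_eq_lintegral_enorm.symm
    _ ≤ eLpNorm (X - Y) p μ := eLpNorm_le_eLpNorm_of_exponent_le hp hmeas.aestronglyMeasurable

lemma ae_exists_eq_of_iIndepFun_rademacher {ε : ℕ → Ω → ℝ} (hε : iIndepFun ε μ)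
    (hrad : ∀ i, μ.map (ε i) = rademacher) {c : ℝ} (hc : c = 1 ∨ c = -1) :
    ∀ᵐ ω ∂μ, ∃ i, ε i ω = c := by
  have hnull : μ (⋂ i, ε i ⁻¹' {c}ᶜ) = 0 := by
    refine hε.measure_iInter_preimage_eq_zero (measurableSet_singleton c).compl
      (ENNReal.inv_lt_one.mpr one_lt_two) fun i => ?_
    rw [measure_preimage_of_map_eq_rademacher (hrad i) (measurableSet_singleton c).compl,
      rademacher_compl_singleton hc]
  rw [ae_iff]
  convert hnull using 2
  ext ω
  simp

end Rademacher

lemma lp.single_left_injective {α E : Type*} [DecidableEq α] [NormedAddCommGroup E]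
    (p : ℝ≥0∞) {a : E} (ha : a ≠ 0) :
    Function.Injective fun i : α => lp.single (E := fun _ => E) p i a := by
  intro i j hij
  by_contra hne
  have := congrArg (fun v : lp (fun _ => E) p => v i) hij
  simp [hne, ha] at this

lemma canonicalProc_single {Ω : Type*} (X : ℕ → Ω → ℝ) (m : ℕ) (ω : Ω) :
    canonicalProc X (lp.single 2 m 1) ω = X m ω := by
  rw [canonicalProc, tsum_eq_single m fun i hi => by simp [hi]]
  simp

-- `⨆` over an empty index is `0` in `ℝ`, whence the hypothesis `0 ≤ c` here and below.
lemma Real.biSup_le {E : Type*} {S : Set E} {f : E → ℝ} {c : ℝ} (hc : 0 ≤ c)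
    (hf : ∀ s ∈ S, f s ≤ c) : ⨆ s ∈ S, f s ≤ c :=
  Real.iSup_le (fun s => Real.iSup_le (hf s) hc) hc

lemma Real.biSup_eq_of_isGreatest {E : Type*} {S : Set E} {f : E → ℝ} {c : ℝ} (hc : 0 ≤ c)
    (hf : IsGreatest (f '' S) c) : ⨆ s ∈ S, f s = c := by
  have hle : ∀ s ∈ S, f s ≤ c := fun s hs => hf.2 ⟨s, hs, rfl⟩
  obtain ⟨s₀, hs₀, rfl⟩ := hf.1
  refine le_antisymm (Real.biSup_le hc hle) (le_ciSup_of_le ?_ s₀ (by rw [ciSup_pos hs₀]))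
  exact ⟨f s₀, Set.forall_mem_range.mpr fun s => Real.iSup_le (hle s) hc⟩

lemma Real.biSup_biSup_eq {E : Type*} {S : Set E} {g : E → E → ℝ} {c : ℝ} (hc : 0 ≤ c)
    (hle : ∀ s ∈ S, ∀ t ∈ S, g s t ≤ c) (hmax : ∃ s ∈ S, ∃ t ∈ S, g s t = c) :
    ⨆ s ∈ S, ⨆ t ∈ S, g s t = c := by
  obtain ⟨s₀, hs₀, t₀, ht₀, hgc⟩ := hmax
  refine Real.biSup_eq_of_isGreatest hc ⟨⟨s₀, hs₀, ?_⟩, ?_⟩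
  · refine Real.biSup_eq_of_isGreatest hc ⟨⟨t₀, ht₀, hgc⟩, ?_⟩
    rintro _ ⟨t, ht, rfl⟩
    exact hle s₀ hs₀ t ht
  · rintro _ ⟨s, hs, rfl⟩
    exact Real.biSup_le hc (hle s hs)

lemma ae_biSup_sub_canonicalProc_eq_two {Ω : Type*} [MeasurableSpace Ω] {μ : Measure Ω}
    {ε : ℕ → Ω → ℝ} (hε : iIndepFun ε μ) (hrad : ∀ i, μ.map (ε i) = rademacher) :
    ∀ᵐ ω ∂μ, ⨆ s ∈ Set.range (fun n : ℕ => lp.single 2 n (1 : ℝ)),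
      ⨆ t ∈ Set.range (fun n : ℕ => lp.single 2 n (1 : ℝ)),
        (canonicalProc ε s ω - canonicalProc ε t ω) = 2 := by
  filter_upwards [ae_all_iff.mpr fun i => ae_eq_one_or_neg_one_of_map_eq_rademacher (hrad i),
    ae_exists_eq_of_iIndepFun_rademacher hε hrad (Or.inl rfl),
    ae_exists_eq_of_iIndepFun_rademacher hε hrad (Or.inr rfl)]
    with ω hsign ⟨i, hi⟩ ⟨j, hj⟩
  refine Real.biSup_biSup_eq zero_le_two ?_ ⟨_, ⟨i, rfl⟩, _, ⟨j, rfl⟩, ?_⟩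
  · rintro _ ⟨m, rfl⟩ _ ⟨n, rfl⟩
    simp only [canonicalProc_single]
    rcases hsign m with h | h <;> rcases hsign n with h' | h' <;> norm_num [h, h']
  · norm_num [canonicalProc_single, hi, hj]

/-- For the canonical Bernoulli process and `T = {eₙ : n}` the canonical basis of `ℓ²`,
`E sup_{s,t∈T}(X_s - X_t) = 2` while `γ_X(T) = ∞`. -/
theorem stmt18 {Ω : Type*} [MeasurableSpace Ω] (μ : Measure Ω) [IsProbabilityMeasure μ]
    (ε : ℕ → Ω → ℝ)
    (hindep : iIndepFun (m := fun _ : ℕ => (inferInstance : MeasurableSpace ℝ)) ε μ)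
    (hrad : ∀ i, Measure.map (ε i) μ
      = (2 : ℝ≥0∞)⁻¹ • (Measure.dirac (1 : ℝ) + Measure.dirac (-1 : ℝ))) :
    (∫ ω, ⨆ s ∈ Set.range (fun n : ℕ => lp.single 2 n (1 : ℝ)),
        ⨆ t ∈ Set.range (fun n : ℕ => lp.single 2 n (1 : ℝ)),
          (canonicalProc ε s ω - canonicalProc ε t ω) ∂μ) = 2 ∧
    gammaX μ (canonicalProc ε)
      (Set.range (fun n : ℕ => lp.single 2 n (1 : ℝ))) = ⊤ := by
  have hX : ∀ i, μ.map (ε i) = rademacher := hrad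
  constructor
  · rw [integral_congr_ae (ae_biSup_sub_canonicalProc_eq_two hindep hX)]
    simp
  · refine gammaX_eq_top_of_separated μ _
      (Set.infinite_range_of_injective (lp.single_left_injective 2 one_ne_zero))
      (c := 2⁻¹) (by simp) ?_
    rintro p hp _ ⟨m, rfl⟩ _ ⟨n, rfl⟩ hmn
    simp only [canonicalProc_single]
    exact inv_two_le_eLpNorm_sub_of_indepFun (hX m) (hX n)
      (hindep.indepFun fun h => hmn (h ▸ rfl)) hp
end
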